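/- Let N¹, …, N^J (J ≥ 1) be K×K positive definite Hermitian complex matrices with Cholesky factors L¹, …, L^J, define l^j_DFE = (ln (L^j)₁₁², …, ln (L^j)_KK²) and l^j_Lin = (ln λ₁(N^j), …, ln λ_K(N^j)) where λ₁(N^j) ≥ … ≥ λ_K(N^j) are the eigenvalues of N^j, and let g : ℝ^K → ℝ be Schur-convex. Then min_{1≤j≤J} g(l^j_DFE) ≤ min_{1≤j≤J} g(l^j_Lin). -/

import Mathlib

open Matrix BigOperators
open scoped ComplexOrder

/-- `a` is majorized by `b` (written `a ≺ b`): after sorting both vectors in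
nonincreasing order, every partial sum of `a` is bounded above by the
corresponding partial sum of `b`, and the total sums agree. -/
def IsMajorizedBy {K : ℕ} (a b : Fin K → ℝ) : Prop :=
  ∃ σ τ : Equiv.Perm (Fin K),
    Antitone (a ∘ σ) ∧ Antitone (b ∘ τ) ∧
    (∀ j : ℕ, j < K →
      ∑ i ∈ Finset.univ.filter (fun i : Fin K => (i : ℕ) ≤ j), a (σ i) ≤
        ∑ i ∈ Finset.univ.filter (fun i : Fin K => (i : ℕ) ≤ j), b (τ i)) ∧
    (∑ i, a i) = (∑ i, b i)

/-- A function `g : ℝ^K → ℝ` is Schur-convex if `a ≺ b` implies `g a ≤ g b`. -/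
def SchurConvex {K : ℕ} (g : (Fin K → ℝ) → ℝ) : Prop :=
  ∀ a b : Fin K → ℝ, IsMajorizedBy a b → g a ≤ g b

/-!
For `S = {s₁ < ⋯ < s_m}`, Cauchy–Binet expands the principal minor
`det N[S,S] = det (L[S,:] L[S,:]ᴴ)` into a sum of nonnegative terms `|det L[S,T]|²`; the term
`T = S` is `∏_{i ∈ S} |L_ii|²` because `L` is lower triangular. Expanding
`N[S,S] = U[S,:] diag(λ) U[S,:]ᴴ` the same way gives a convex combination (its weights sum to
`det (U[S,:] U[S,:]ᴴ) = 1`) of products of `m` eigenvalues, so `det N[S,S]` is at most the product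
of the `m` largest ones. Hence every partial sum of the sorted `log |L_ii|²` is bounded by the
corresponding partial sum of the sorted log-eigenvalues, with equality for the total since both
products equal `det N`; this log-majorization is all a Schur-convex `g` needs.
-/

open Finset

theorem Tuple.strictMono_comp_sort {α : Type*} [LinearOrder α] {m : ℕ} {f : Fin m → α}
    (hf : Function.Injective f) : StrictMono (f ∘ Tuple.sort f) :=
  (Tuple.monotone_sort f).strictMono_of_injective (hf.comp (Tuple.sort f).injective)

theorem Tuple.sort_comp_perm_of_strictMono {α : Type*} [LinearOrder α] {m : ℕ}
    {g : Fin m → α} (hg : StrictMono g) (π : Equiv.Perm (Fin m)) :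
    Tuple.sort (g ∘ π) = π⁻¹ :=
  (Tuple.eq_sort_iff.2 ⟨by simpa [Function.comp_def] using hg.monotone,
    fun _ _ hij h => absurd (hg.injective (by simpa using h)) hij.ne⟩).symm

theorem Fin.val_le_val_of_strictMono {m K : ℕ} {g : Fin m → Fin K} (hg : StrictMono g)
    (t : Fin m) : (t : ℕ) ≤ g t := by
  obtain ⟨t, ht⟩ := t
  induction t with
  | zero => exact Nat.zero_le _
  | succ n ih =>
    exact Nat.succ_le_of_lt <| (ih (by omega)).trans_lt <|
      hg (show (⟨n, by omega⟩ : Fin m) < ⟨n + 1, ht⟩ from Nat.lt_succ_self n)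

theorem Antitone.prod_comp_le_prod_castLE {R : Type*} [CommSemiring R] [PartialOrder R]
    [IsOrderedRing R] {K m : ℕ} {y : Fin K → R} (hy : Antitone y) (hy0 : ∀ i, 0 ≤ y i)
    (hm : m ≤ K) {f : Fin m → Fin K} (hf : Function.Injective f) :
    ∏ t, y (f t) ≤ ∏ t, y (Fin.castLE hm t) := by
  rw [← Equiv.prod_comp (Tuple.sort f)]
  exact prod_le_prod (fun _ _ => hy0 _) fun t _ =>
    hy (Fin.val_le_val_of_strictMono (Tuple.strictMono_comp_sort hf) t)

namespace Matrix

variable {R : Type*} [CommRing R] {m K : ℕ}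

theorem det_mul_eq_sum_det_submatrix_mul_prod (A : Matrix (Fin m) (Fin K) R)
    (B : Matrix (Fin K) (Fin m) R) :
    (A * B).det = ∑ f : Fin m → Fin K, (A.submatrix id f).det * ∏ i, B (f i) i := by
  simp_rw [det_apply, mul_apply, submatrix_apply, id_eq, Fintype.prod_sum, smul_sum]
  rw [sum_comm]
  refine sum_congr rfl fun f _ => ?_
  rw [sum_mul]
  refine sum_congr rfl fun σ _ => ?_
  rw [prod_mul_distrib, smul_mul_assoc]

/-- The Cauchy–Binet formula. -/
theorem det_mul_eq_sum_det_submatrix_mul_det_submatrix (A : Matrix (Fin m) (Fin K) R)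
    (B : Matrix (Fin K) (Fin m) R) :
    (A * B).det = ∑ g : Fin m → Fin K with StrictMono g,
      (A.submatrix id g).det * (B.submatrix g id).det := by
  set F : (Fin m → Fin K) → R := fun f => (A.submatrix id f).det * ∏ i, B (f i) i
  calc (A * B).det = ∑ f with Function.Injective f, F f := by
        rw [det_mul_eq_sum_det_submatrix_mul_prod]
        refine (sum_subset (filter_subset _ _) fun f _ hf => ?_).symm
        obtain ⟨i, j, hij, hne⟩ := Function.not_injective_iff.1 (by simpa using hf)
        simp only [det_zero_of_column_eq (M := A.submatrix id f) hne fun k => by simp [hij],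
          zero_mul]
    -- an injective `f` is `g ∘ π` for a unique strictly monotone `g` and permutation `π`
    _ = ∑ p ∈ (univ.filter fun g : Fin m → Fin K => StrictMono g) ×ˢ
          (univ : Finset (Equiv.Perm (Fin m))), F (p.1 ∘ p.2) := by
        have sort_inv (f : Fin m → Fin K) :
            (f ∘ Tuple.sort f) ∘ ⇑(Tuple.sort f)⁻¹ = f := by
          ext i
          simp
        refine sum_nbij' (fun f => (f ∘ Tuple.sort f, (Tuple.sort f)⁻¹)) (fun p => p.1 ∘ p.2)
          ?_ ?_ (fun f _ => sort_inv f) ?_ (fun f _ => by rw [sort_inv])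
        · intro f hf
          simp only [mem_filter, mem_univ, true_and, mem_product, and_true] at hf ⊢
          exact Tuple.strictMono_comp_sort hf
        · rintro ⟨g, π⟩ hp
          simp only [mem_filter, mem_univ, true_and, mem_product, and_true] at hp ⊢
          exact hp.injective.comp π.injective
        · rintro ⟨g, π⟩ hp
          simp only [mem_filter, mem_univ, true_and, mem_product, and_true] at hp
          rw [Tuple.sort_comp_perm_of_strictMono hp, inv_inv]
          ext i <;> simp
    _ = ∑ g : Fin m → Fin K with StrictMono g,
          (A.submatrix id g).det * (B.submatrix g id).det := by
        rw [sum_product]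
        refine sum_congr rfl fun g _ => ?_
        simp only [F, det_apply (B.submatrix g id), mul_sum, submatrix_apply, id_eq]
        refine sum_congr rfl fun π _ => ?_
        rw [show A.submatrix id (g ∘ π) = (A.submatrix id g).submatrix id π from rfl,
          det_permute', Units.smul_def, zsmul_eq_mul]
        simp only [Function.comp_apply]
        ring

variable {𝕜 : Type*} [RCLike 𝕜]

theorem re_det_mul_diagonal_mul_conjTranspose (A : Matrix (Fin m) (Fin K) 𝕜)
    (d : Fin K → ℝ) :
    RCLike.re (A * diagonal (fun k => (d k : 𝕜)) * Aᴴ).det =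
      ∑ g : Fin m → Fin K with StrictMono g,
        ‖(A.submatrix id g).det‖ ^ 2 * ∏ i, d (g i) := by
  rw [det_mul_eq_sum_det_submatrix_mul_det_submatrix, map_sum]
  refine sum_congr rfl fun g _ => ?_
  have hsub : (A * diagonal fun k => (d k : 𝕜)).submatrix id g =
      A.submatrix id g * diagonal fun i => (d (g i) : 𝕜) := by
    ext i j
    simp [mul_diagonal]
  rw [hsub, det_mul, det_diagonal, ← conjTranspose_submatrix, det_conjTranspose, mul_right_comm,
    RCLike.star_def, RCLike.mul_conj, ← RCLike.ofReal_pow, ← RCLike.ofReal_prod,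
    ← RCLike.ofReal_mul, RCLike.ofReal_re]

theorem re_det_mul_conjTranspose (A : Matrix (Fin m) (Fin K) 𝕜) :
    RCLike.re (A * Aᴴ).det =
      ∑ g : Fin m → Fin K with StrictMono g, ‖(A.submatrix id g).det‖ ^ 2 := by
  simpa using re_det_mul_diagonal_mul_conjTranspose A 1

theorem IsLowerTriangular.det_mul_conjTranspose {L : Matrix (Fin K) (Fin K) 𝕜}
    (hL : L.IsLowerTriangular) :
    (L * Lᴴ).det = ((∏ i, ‖L i i‖ ^ 2 : ℝ) : 𝕜) := by
  rw [det_mul, det_conjTranspose, det_of_isLowerTriangular L hL, RCLike.star_def,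
    RCLike.mul_conj, norm_prod, prod_pow, RCLike.ofReal_pow]

theorem IsLowerTriangular.prod_norm_sq_diag_le_re_det_submatrix {L : Matrix (Fin K) (Fin K) 𝕜}
    (hL : L.IsLowerTriangular) {e : Fin m → Fin K} (he : StrictMono e) :
    ∏ t, ‖L (e t) (e t)‖ ^ 2 ≤ RCLike.re ((L * Lᴴ).submatrix e e).det := by
  have hsub : (L * Lᴴ).submatrix e e = L.submatrix e id * (L.submatrix e id)ᴴ := by
    rw [conjTranspose_submatrix]
    exact submatrix_mul L Lᴴ e id e Function.bijective_id
  have hL_sub : (L.submatrix e e).IsLowerTriangular := fun _ _ hij => hL (he hij)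
  rw [hsub, re_det_mul_conjTranspose]
  calc ∏ t, ‖L (e t) (e t)‖ ^ 2 = ‖((L.submatrix e id).submatrix id e).det‖ ^ 2 := by
        rw [submatrix_submatrix, Function.id_comp, Function.comp_id,
          det_of_isLowerTriangular _ hL_sub, norm_prod, prod_pow]
        rfl
    _ ≤ _ := single_le_sum (f := fun g => ‖((L.submatrix e id).submatrix id g).det‖ ^ 2)
        (fun _ _ => sq_nonneg _) ((mem_filter_univ _).2 he)

theorem PosSemidef.re_det_submatrix_le_prod {N : Matrix (Fin K) (Fin K) 𝕜}
    (hN : N.PosSemidef) {lam : Fin K → ℝ} (hlam : Antitone lam)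
    (hσ : ∃ σ : Equiv.Perm (Fin K), lam = hN.isHermitian.eigenvalues ∘ σ)
    (hm : m ≤ K) {e : Fin m → Fin K} (he : Function.Injective e) :
    RCLike.re (N.submatrix e e).det ≤ ∏ t, lam (Fin.castLE hm t) := by
  obtain ⟨σ, rfl⟩ := hσ
  set d := hN.isHermitian.eigenvalues
  set U : Matrix (Fin K) (Fin K) 𝕜 := ↑hN.isHermitian.eigenvectorUnitary
  set A := U.submatrix e id
  have hUU : U * Uᴴ = 1 :=
    mem_unitaryGroup_iff.1 hN.isHermitian.eigenvectorUnitary.2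
  have hN_eq : N.submatrix e e = A * diagonal (fun k => (d k : 𝕜)) * Aᴴ := by
    conv_lhs => rw [hN.isHermitian.spectral_theorem, Unitary.conjStarAlgAut_apply]
    rw [conjTranspose_submatrix, submatrix_mul _ _ e id e Function.bijective_id,
      submatrix_mul _ _ e id id Function.bijective_id, submatrix_id_id]
    rfl
  have hAA : A * Aᴴ = 1 := by
    rw [conjTranspose_submatrix, ← submatrix_mul _ _ e id e Function.bijective_id, hUU,
      submatrix_one e he]
  have hprod : ∀ g : Fin m → Fin K, StrictMono g →
      ∏ i, d (g i) ≤ ∏ t, (d ∘ σ) (Fin.castLE hm t) := by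
    intro g hg
    simpa using hlam.prod_comp_le_prod_castLE (fun i => hN.eigenvalues_nonneg _) hm
      (σ.symm.injective.comp hg.injective)
  rw [hN_eq, re_det_mul_diagonal_mul_conjTranspose]
  calc ∑ g : Fin m → Fin K with StrictMono g, ‖(A.submatrix id g).det‖ ^ 2 * ∏ i, d (g i)
      ≤ ∑ g : Fin m → Fin K with StrictMono g,
          ‖(A.submatrix id g).det‖ ^ 2 * ∏ t, (d ∘ σ) (Fin.castLE hm t) :=
        sum_le_sum fun g hg =>
          mul_le_mul_of_nonneg_left (hprod g ((mem_filter_univ _).1 hg)) (sq_nonneg _)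
    _ = ∏ t, (d ∘ σ) (Fin.castLE hm t) := by
        rw [← sum_mul, ← re_det_mul_conjTranspose, hAA, det_one, RCLike.one_re, one_mul]

end Matrix

theorem isMajorizedBy_of_sum_le {K : ℕ} {a b : Fin K → ℝ} (hb : Antitone b)
    (hle : ∀ m (hm : m ≤ K) (f : Fin m → Fin K), Function.Injective f →
      ∑ t, a (f t) ≤ ∑ t, b (Fin.castLE hm t))
    (heq : ∑ i, a i = ∑ i, b i) : IsMajorizedBy a b := by
  refine ⟨Tuple.sort (-a), 1, fun _ _ hij => by simpa using Tuple.monotone_sort (-a) hij, hb,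
    fun j hj => ?_, heq⟩
  have hfilter : (univ.filter fun i : Fin K => (i : ℕ) ≤ j) = univ.map (Fin.castLEEmb hj) := by
    ext i
    simp only [mem_filter, mem_univ, true_and, mem_map, Fin.coe_castLEEmb, Fin.ext_iff,
      Fin.val_castLE]
    exact ⟨fun h => ⟨⟨i, by omega⟩, rfl⟩, fun ⟨k, hk⟩ => by omega⟩
  rw [hfilter, sum_map, sum_map]
  exact hle (j + 1) hj _ ((Tuple.sort (-a)).injective.comp (Fin.castLE_injective hj))

theorem isMajorizedBy_log_of_prod_le {K : ℕ} {x y : Fin K → ℝ} (hx : ∀ i, 0 < x i)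
    (hy : ∀ i, 0 < y i) (hy_anti : Antitone y)
    (hle : ∀ m (hm : m ≤ K) (f : Fin m → Fin K), Function.Injective f →
      ∏ t, x (f t) ≤ ∏ t, y (Fin.castLE hm t))
    (heq : ∏ i, x i = ∏ i, y i) :
    IsMajorizedBy (fun i => Real.log (x i)) (fun i => Real.log (y i)) := by
  have sum_log {n : ℕ} (z : Fin n → ℝ) (hz : ∀ i, 0 < z i) :
      ∑ i, Real.log (z i) = Real.log (∏ i, z i) :=
    (Real.log_prod fun i _ => (hz i).ne').symm
  refine isMajorizedBy_of_sum_le (fun i j hij => Real.log_le_log (hy _) (hy_anti hij))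
    (fun m hm f hf => ?_) (by rw [sum_log x hx, sum_log y hy, heq])
  rw [sum_log (fun t => x (f t)) fun _ => hx _,
    sum_log (fun t => y (Fin.castLE hm t)) fun _ => hy _]
  exact Real.log_le_log (prod_pos fun _ _ => hx _) (hle m hm f hf)

theorem isMajorizedBy_log_norm_sq_diag_log_eigenvalues {𝕜 : Type*} [RCLike 𝕜] {K : ℕ}
    {N L : Matrix (Fin K) (Fin K) 𝕜} (hN : N.PosDef) (hL : L.IsLowerTriangular)
    (hNL : N = L * Lᴴ) {lam : Fin K → ℝ} (hlam : Antitone lam)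
    (hσ : ∃ σ : Equiv.Perm (Fin K), lam = hN.isHermitian.eigenvalues ∘ σ) :
    IsMajorizedBy (fun k => Real.log (‖L k k‖ ^ 2)) (fun k => Real.log (lam k)) := by
  obtain ⟨σ, hlam_eq⟩ := hσ
  have hlam_pos : ∀ i, 0 < lam i := by
    simpa [hlam_eq] using fun i => hN.eigenvalues_pos (σ i)
  have hprod : ∏ i, ‖L i i‖ ^ 2 = ∏ i, lam i := by
    apply RCLike.ofReal_injective (K := 𝕜)
    rw [← hL.det_mul_conjTranspose, ← hNL, hN.isHermitian.det_eq_prod_eigenvalues, hlam_eq,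
      RCLike.ofReal_prod]
    exact (Equiv.prod_comp σ fun i => (hN.isHermitian.eigenvalues i : 𝕜)).symm
  have hdiag_pos : ∀ i, 0 < ‖L i i‖ ^ 2 := fun i =>
    (sq_nonneg _).lt_of_ne' <| prod_ne_zero_iff.1
      (hprod ▸ (prod_pos fun i _ => hlam_pos i).ne') i (mem_univ i)
  refine isMajorizedBy_log_of_prod_le hdiag_pos hlam_pos hlam (fun m hm f hf => ?_) hprod
  subst hNL
  calc ∏ t, ‖L (f t) (f t)‖ ^ 2
        = ∏ t, ‖L ((f ∘ Tuple.sort f) t) ((f ∘ Tuple.sort f) t)‖ ^ 2 :=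
        (Equiv.prod_comp (Tuple.sort f) (fun t => ‖L (f t) (f t)‖ ^ 2)).symm
    _ ≤ RCLike.re ((L * Lᴴ).submatrix (f ∘ Tuple.sort f) (f ∘ Tuple.sort f)).det :=
        hL.prod_norm_sq_diag_le_re_det_submatrix (Tuple.strictMono_comp_sort hf)
    _ ≤ ∏ t, lam (Fin.castLE hm t) :=
        hN.posSemidef.re_det_submatrix_le_prod hlam ⟨σ, hlam_eq⟩ hm
          (Tuple.strictMono_comp_sort hf).injective

theorem dfe_codebook_min_le_linear_codebook_min_general
    {K J : ℕ}
    (N : Fin J → Matrix (Fin K) (Fin K) ℂ) (hN : ∀ j, (N j).PosDef)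
    (L : Fin J → Matrix (Fin K) (Fin K) ℂ)
    (hLtri : ∀ j, ∀ i k : Fin K, i < k → L j i k = 0)
    (hLdiag : ∀ j, ∀ i : Fin K, 0 < (L j i i).re ∧ (L j i i).im = 0)
    (hChol : ∀ j, N j = L j * (L j)ᴴ)
    (lam : Fin J → Fin K → ℝ)
    (hlam_anti : ∀ j, Antitone (lam j))
    (hlam : ∀ j, ∃ σ : Equiv.Perm (Fin K),
      lam j = (hN j).isHermitian.eigenvalues ∘ σ)
    (g : (Fin K → ℝ) → ℝ) (hg : SchurConvex g) :
    ⨅ j : Fin J, g (fun k => Real.log ((L j k k).re ^ 2)) ≤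
      ⨅ j : Fin J, g (fun k => Real.log (lam j k)) := by
  refine ciInf_mono (Set.finite_range _).bddBelow fun j => hg _ _ ?_
  have hdiag : ∀ k, (L j k k).re ^ 2 = ‖L j k k‖ ^ 2 := fun k => by
    rw [Complex.sq_norm, Complex.normSq_apply, (hLdiag j k).2]
    ring
  simp only [hdiag]
  exact isMajorizedBy_log_norm_sq_diag_log_eigenvalues (hN j) (fun i k hik => hLtri j i k hik)
    (hChol j) (hlam_anti j) (hlam j)

/-- For positive definite matrices `N¹,…,N^J` with Cholesky
factors `L¹,…,L^J`, log-MSE vectors `l^j_DFE = (ln (L^j)₁₁²,…,ln (L^j)_KK²)`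
and `l^j_Lin = (ln λ₁(N^j),…,ln λ_K(N^j))` (eigenvalues in nonincreasing
order), and any Schur-convex `g`,
`min_j g(l^j_DFE) ≤ min_j g(l^j_Lin)`. -/
theorem dfe_codebook_min_le_linear_codebook_min
    {K J : ℕ} (hJ : 0 < J)
    (N : Fin J → Matrix (Fin K) (Fin K) ℂ) (hN : ∀ j, (N j).PosDef)
    (L : Fin J → Matrix (Fin K) (Fin K) ℂ)
    (hLtri : ∀ j, ∀ i k : Fin K, i < k → L j i k = 0)
    (hLdiag : ∀ j, ∀ i : Fin K, 0 < (L j i i).re ∧ (L j i i).im = 0)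
    (hChol : ∀ j, N j = L j * (L j)ᴴ)
    (lam : Fin J → Fin K → ℝ)
    (hlam_anti : ∀ j, Antitone (lam j))
    (hlam : ∀ j, ∃ σ : Equiv.Perm (Fin K),
      lam j = (hN j).isHermitian.eigenvalues ∘ σ)
    (g : (Fin K → ℝ) → ℝ) (hg : SchurConvex g) :
    ⨅ j : Fin J, g (fun k => Real.log ((L j k k).re ^ 2)) ≤
      ⨅ j : Fin J, g (fun k => Real.log (lam j k)) :=
  dfe_codebook_min_le_linear_codebook_min_general N hN L hLtri hLdiag hChol lam hlam_anti hlam g hg
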